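/- (Global strong maximum principle) Let (X, μ) be a σ-finite measure space and k : X×X → (0,∞] a symmetric measurable kernel. Let U : X → ℝ be measurable and let v ∈ D(I) satisfy v ≥ 0 μ-a.e., U₊·min{v,1} ∈ L¹(X,μ) (U₊ := max(U,0)), and I[φ,v] + ∫_X φ U v dμ ≥ 0 for every 0 ≤ φ ∈ D(I) (the integral being assumed to exist in (−∞, +∞]). Then either v = 0 μ-a.e. on X or v > 0 μ-a.e. on X. -/

import Mathlib

open MeasureTheory Real
open scoped ENNReal

noncomputable section

variable {X : Type*}

/-- The quadratic form `I[w] = (1/2)∬ k(x,y)(w(x)-w(y))² dμ dμ`, as an extended real. -/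
def formI [MeasurableSpace X] (μ : Measure X) (k : X → X → ℝ≥0∞) (w : X → ℝ) : ℝ≥0∞ :=
  (1 / 2 : ℝ≥0∞) *
    ∫⁻ p : X × X, k p.1 p.2 * ENNReal.ofReal ((w p.1 - w p.2) ^ 2) ∂(μ.prod μ)

/-- The form domain `D(I)`. -/
def memDI [MeasurableSpace X] (μ : Measure X) (k : X → X → ℝ≥0∞) (w : X → ℝ) : Prop :=
  Measurable w ∧ formI μ k w < ⊤

/-- The bilinear form `I[v,w]`. -/
def formI₂ [MeasurableSpace X] (μ : Measure X) (k : X → X → ℝ≥0∞) (v w : X → ℝ) : ℝ :=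
  (1 / 2) *
    ∫ p : X × X, (k p.1 p.2).toReal * (v p.1 - v p.2) * (w p.1 - w p.2) ∂(μ.prod μ)

/-! Test the inequality with `φₙ = (1 - (n+1) v)₊ ∈ D(I)`. As `φₙ` is a decreasing function of `v`,
the integrand of `-I[φₙ, v]` is nonnegative, and on `{v = 0} × {v > 0}` it is at least
`k(x,y) min(v(y), 1) v(y)`, uniformly in `n`. Hence the integral of that lower bound is at most
`-2 I[φₙ, v] ≤ 2 ∫ φₙ U v`, which tends to `0` by dominated convergence since
`φₙ v ≤ min(v, 1/(n+1))` and `U₊ min(v, 1) ∈ L¹`. As `k > 0`, and `k < ∞` a.e. where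
`v(x) ≠ v(y)` because `I[v] < ∞`, the set `{v = 0} × {v > 0}` is `μ ⊗ μ`-null, so one of its
factors is `μ`-null. -/

open Filter Topology
open scoped NNReal

def cutoff (c a : ℝ) : ℝ := max (1 - c * a) 0

section cutoff

variable {c a b : ℝ}

theorem cutoff_zero_right (c : ℝ) : cutoff c 0 = 1 := by simp [cutoff]

theorem lipschitzWith_cutoff (hc : 0 ≤ c) : LipschitzWith (Real.toNNReal c) (cutoff c) := by
  refine LipschitzWith.of_dist_le_mul fun a b => ?_
  rw [Real.coe_toNNReal c hc, Real.dist_eq, Real.dist_eq]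
  calc |cutoff c a - cutoff c b| ≤ |(1 - c * a) - (1 - c * b)| := abs_max_sub_max_le_abs _ _ _
    _ = c * |a - b| := by
      rw [show (1 - c * a) - (1 - c * b) = c * (b - a) by ring, abs_mul, abs_of_nonneg hc,
        abs_sub_comm]

theorem cutoff_sub_mul_sub_nonpos (hc : 0 ≤ c) : (cutoff c a - cutoff c b) * (a - b) ≤ 0 := by
  rcases le_total a b with h | h
  · have : cutoff c b ≤ cutoff c a := max_le_max (by nlinarith) le_rfl
    exact mul_nonpos_of_nonneg_of_nonpos (by linarith) (by linarith)
  · have : cutoff c a ≤ cutoff c b := max_le_max (by nlinarith) le_rfl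
    exact mul_nonpos_of_nonpos_of_nonneg (by linarith) (by linarith)

theorem cutoff_mul_le_min (hc : 1 ≤ c) (ha : 0 ≤ a) : cutoff c a * a ≤ min a c⁻¹ := by
  rcases le_total (c * a) 1 with h | h
  · rw [cutoff, max_eq_left (by linarith)]
    have hac : a ≤ c⁻¹ := by rw [← one_div, le_div_iff₀' (by linarith)]; exact h
    have hle : (1 - c * a) * a ≤ a := by
      nlinarith [mul_nonneg (mul_nonneg (by linarith : 0 ≤ c) ha) ha]
    exact le_min hle (hle.trans hac)
  · rw [cutoff, max_eq_right (by linarith), zero_mul]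
    exact le_min ha (by positivity)

theorem min_le_one_sub_cutoff (hc : 1 ≤ c) (ha : 0 ≤ a) : min a 1 ≤ 1 - cutoff c a := by
  rcases le_total (c * a) 1 with h | h
  · rw [cutoff, max_eq_left (by linarith)]
    nlinarith [min_le_left a 1]
  · rw [cutoff, max_eq_right (by linarith), sub_zero]
    exact min_le_right a 1

theorem max_cutoff_mul_le (hc : 1 ≤ c) (ha : 0 ≤ a) (u : ℝ) :
    max (cutoff c a * u * a) 0 ≤ max u 0 * min a c⁻¹ := by
  refine max_le ?_ (mul_nonneg (le_max_right _ _) (le_min ha (by positivity)))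
  calc cutoff c a * u * a = u * (cutoff c a * a) := by ring
    _ ≤ max u 0 * (cutoff c a * a) :=
      mul_le_mul_of_nonneg_right (le_max_left u 0) (mul_nonneg (le_max_right _ _) ha)
    _ ≤ max u 0 * min a c⁻¹ := by gcongr; exact cutoff_mul_le_min hc ha

end cutoff

theorem measurable_kernel_mul_sq_sub [MeasurableSpace X] {k : X → X → ℝ≥0∞} {v : X → ℝ}
    (hk : Measurable (Function.uncurry k)) (hv : Measurable v) :
    Measurable fun p : X × X => k p.1 p.2 * ENNReal.ofReal ((v p.1 - v p.2) ^ 2) :=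
  hk.mul (((hv.comp measurable_fst).sub (hv.comp measurable_snd)).pow_const 2).ennreal_ofReal

namespace memDI

variable [MeasurableSpace X] {μ : Measure X} {k : X → X → ℝ≥0∞} {v w : X → ℝ}

theorem lintegral_ne_top (hv : memDI μ k v) :
    ∫⁻ p : X × X, k p.1 p.2 * ENNReal.ofReal ((v p.1 - v p.2) ^ 2) ∂(μ.prod μ) ≠ ⊤ := by
  intro h
  have := hv.2
  rw [formI, h, ENNReal.mul_top (by norm_num)] at this
  exact lt_irrefl _ this

theorem comp_lipschitzWith (hv : memDI μ k v) {f : ℝ → ℝ} {K : ℝ≥0} (hf : LipschitzWith K f) :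
    memDI μ k (f ∘ v) := by
  refine ⟨hf.continuous.measurable.comp hv.1, ?_⟩
  have hpt (a b : ℝ) :
      ENNReal.ofReal ((f a - f b) ^ 2) ≤ (K : ℝ≥0∞) ^ 2 * ENNReal.ofReal ((a - b) ^ 2) := by
    have h := hf.dist_le_mul a b
    rw [Real.dist_eq, Real.dist_eq] at h
    rw [← ENNReal.ofReal_coe_nnreal, ← ENNReal.ofReal_pow K.coe_nonneg,
      ← ENNReal.ofReal_mul (by positivity)]
    refine ENNReal.ofReal_le_ofReal ?_
    calc (f a - f b) ^ 2 = |f a - f b| ^ 2 := (sq_abs _).symm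
      _ ≤ (K * |a - b|) ^ 2 := by gcongr
      _ = K ^ 2 * (a - b) ^ 2 := by rw [mul_pow, sq_abs]
  calc formI μ k (f ∘ v)
      ≤ (1 / 2) * ∫⁻ p : X × X,
          (K : ℝ≥0∞) ^ 2 * (k p.1 p.2 * ENNReal.ofReal ((v p.1 - v p.2) ^ 2)) ∂(μ.prod μ) := by
        refine mul_le_mul_right (lintegral_mono fun p => ?_) _
        rw [mul_left_comm]
        exact mul_le_mul_right (hpt _ _) _
    _ < ⊤ := by
        rw [lintegral_const_mul' _ _ (by simp)]
        exact ENNReal.mul_lt_top (by norm_num)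
          (ENNReal.mul_lt_top (by simp) hv.lintegral_ne_top.lt_top)

variable (hk : Measurable (Function.uncurry k))
include hk

theorem integrable_energy (hv : memDI μ k v) :
    Integrable (fun p : X × X => (k p.1 p.2).toReal * (v p.1 - v p.2) ^ 2) (μ.prod μ) := by
  refine (integrable_toReal_of_lintegral_ne_top (measurable_kernel_mul_sq_sub hk hv.1).aemeasurable hv.lintegral_ne_top).congr
    (Filter.Eventually.of_forall fun p => ?_)
  simp [ENNReal.toReal_mul, sq_nonneg]

theorem integrable_bilinear (hw : memDI μ k w) (hv : memDI μ k v) :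
    Integrable (fun p : X × X => (k p.1 p.2).toReal * (w p.1 - w p.2) * (v p.1 - v p.2))
      (μ.prod μ) := by
  refine Integrable.mono' ((hw.integrable_energy hk).add (hv.integrable_energy hk)) ?_
    (Filter.Eventually.of_forall fun p => ?_)
  · exact ((hk.ennreal_toReal.mul ((hw.1.comp measurable_fst).sub (hw.1.comp measurable_snd))).mul
      ((hv.1.comp measurable_fst).sub (hv.1.comp measurable_snd))).aestronglyMeasurable
  · have hκ : 0 ≤ (k p.1 p.2).toReal := ENNReal.toReal_nonneg
    rw [Real.norm_eq_abs, mul_assoc, abs_mul, abs_of_nonneg hκ, Pi.add_apply, ← mul_add]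
    gcongr
    rw [abs_mul]
    nlinarith [two_mul_le_add_sq |w p.1 - w p.2| |v p.1 - v p.2|, sq_abs (w p.1 - w p.2),
      sq_abs (v p.1 - v p.2), abs_nonneg (w p.1 - w p.2), abs_nonneg (v p.1 - v p.2)]

theorem ae_kernel_ne_top (hv : memDI μ k v) :
    ∀ᵐ p ∂(μ.prod μ), v p.1 ≠ v p.2 → k p.1 p.2 ≠ ⊤ := by
  filter_upwards [ae_lt_top (measurable_kernel_mul_sq_sub hk hv.1) hv.lintegral_ne_top] with p hp hne htop
  have : (0 : ℝ) < (v p.1 - v p.2) ^ 2 := by positivity [sub_ne_zero.2 hne]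
  rw [htop, ENNReal.top_mul (ENNReal.ofReal_pos.2 this).ne'] at hp
  exact lt_irrefl _ hp

end memDI

section jumpDensity

variable {k : X → X → ℝ≥0∞} {v : X → ℝ}

def jumpDensity (k : X → X → ℝ≥0∞) (v : X → ℝ) : X × X → ℝ :=
  ({x | v x = 0} ×ˢ {x | 0 < v x}).indicator fun p => (k p.1 p.2).toReal * (min (v p.2) 1 * v p.2)

theorem jumpDensity_nonneg : 0 ≤ jumpDensity k v :=
  Set.indicator_nonneg fun _ hp => mul_nonneg ENNReal.toReal_nonneg
    (mul_nonneg (le_min hp.2.le zero_le_one) hp.2.le)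

theorem jumpDensity_le {c : ℝ} (hc : 1 ≤ c) (p : X × X) :
    jumpDensity k v p ≤
      -((k p.1 p.2).toReal * ((cutoff c ∘ v) p.1 - (cutoff c ∘ v) p.2) * (v p.1 - v p.2)) := by
  have hκ : 0 ≤ (k p.1 p.2).toReal := ENNReal.toReal_nonneg
  by_cases hp : p ∈ {x | v x = 0} ×ˢ {x | 0 < v x}
  · have h1 : v p.1 = 0 := hp.1
    have h2 : 0 < v p.2 := hp.2
    rw [jumpDensity, Set.indicator_of_mem hp, Function.comp_apply, Function.comp_apply, h1,
      cutoff_zero_right]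
    have : min (v p.2) 1 * v p.2 ≤ (1 - cutoff c (v p.2)) * v p.2 := by
      gcongr; exact min_le_one_sub_cutoff hc h2.le
    nlinarith
  · rw [jumpDensity, Set.indicator_of_notMem hp, neg_nonneg, mul_assoc]
    exact mul_nonpos_of_nonneg_of_nonpos hκ (cutoff_sub_mul_sub_nonpos (by linarith))

variable [MeasurableSpace X] {μ : Measure X} (hk : Measurable (Function.uncurry k))
include hk

theorem integrable_jumpDensity (hv : memDI μ k v) : Integrable (jumpDensity k v) (μ.prod μ) := by
  have hv₁ : Measurable fun p : X × X => v p.1 := hv.1.comp measurable_fst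
  have hv₂ : Measurable fun p : X × X => v p.2 := hv.1.comp measurable_snd
  refine ((hv.comp_lipschitzWith (lipschitzWith_cutoff zero_le_one)).integrable_bilinear hk
    hv).neg.mono' ?_ (Filter.Eventually.of_forall fun p => ?_)
  · exact ((hk.ennreal_toReal.mul ((hv₂.min measurable_const).mul hv₂)).indicator
      ((hv₁ (measurableSet_singleton 0)).inter (hv₂ measurableSet_Ioi))).aestronglyMeasurable
  · rw [Real.norm_eq_abs, abs_of_nonneg (jumpDensity_nonneg p)]
    exact jumpDensity_le le_rfl p

theorem integral_jumpDensity_le (hv : memDI μ k v) {c : ℝ} (hc : 1 ≤ c) :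
    ∫ p, jumpDensity k v p ∂(μ.prod μ) ≤ -2 * formI₂ μ k (cutoff c ∘ v) v := by
  have hφ := hv.comp_lipschitzWith (lipschitzWith_cutoff (by linarith : (0 : ℝ) ≤ c))
  calc ∫ p, jumpDensity k v p ∂(μ.prod μ)
      ≤ ∫ p, -((k p.1 p.2).toReal * ((cutoff c ∘ v) p.1 - (cutoff c ∘ v) p.2) * (v p.1 - v p.2))
          ∂(μ.prod μ) :=
        integral_mono (integrable_jumpDensity hk hv) (hφ.integrable_bilinear hk hv).neg
          (jumpDensity_le hc)
    _ = -2 * formI₂ μ k (cutoff c ∘ v) v := by rw [integral_neg, formI₂]; ring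

theorem measure_zero_mul_measure_pos_eq_zero [SFinite μ] (hkpos : ∀ x y, 0 < k x y)
    (hv : memDI μ k v) (h : ∫ p, jumpDensity k v p ∂(μ.prod μ) ≤ 0) :
    μ {x | v x = 0} * μ {x | 0 < v x} = 0 := by
  have hzero : jumpDensity k v =ᵐ[μ.prod μ] 0 :=
    (integral_eq_zero_iff_of_nonneg jumpDensity_nonneg (integrable_jumpDensity hk hv)).1
      (le_antisymm h (integral_nonneg jumpDensity_nonneg))
  rw [← Measure.prod_prod, measure_eq_zero_iff_ae_notMem]
  filter_upwards [hzero, hv.ae_kernel_ne_top hk] with p hp hfin hmem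
  have h1 : v p.1 = 0 := hmem.1
  have h2 : 0 < v p.2 := hmem.2
  rw [jumpDensity, Set.indicator_of_mem hmem, Pi.zero_apply] at hp
  have hκ : (k p.1 p.2).toReal = 0 := by
    rcases mul_eq_zero.1 hp with hκ | hv'
    · exact hκ
    · exact absurd hv' (mul_pos (lt_min h2 one_pos) h2).ne'
  rcases (ENNReal.toReal_eq_zero_iff _).1 hκ with h0 | htop
  · exact (hkpos p.1 p.2).ne' h0
  · exact hfin (by rw [h1]; exact h2.ne) htop

end jumpDensity

section potential

variable [MeasurableSpace X] {μ : Measure X} {U v : X → ℝ}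

theorem ae_norm_max_cutoff_mul_le (hv0 : ∀ᵐ x ∂μ, 0 ≤ v x) {c : ℝ} (hc : 1 ≤ c) :
    ∀ᵐ x ∂μ, ‖max ((cutoff c ∘ v) x * U x * v x) 0‖ ≤ max (U x) 0 * min (v x) 1 := by
  filter_upwards [hv0] with x hx
  rw [Real.norm_eq_abs, abs_of_nonneg (le_max_right _ _)]
  exact (max_cutoff_mul_le hc hx (U x)).trans (mul_le_mul_of_nonneg_left
    (min_le_min_left _ (inv_le_one_of_one_le₀ hc)) (le_max_right _ _))

theorem integrable_max_cutoff_mul (hU : Measurable U) (hv : Measurable v) (hv0 : ∀ᵐ x ∂μ, 0 ≤ v x)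
    (hUint : Integrable (fun x => max (U x) 0 * min (v x) 1) μ) {c : ℝ} (hc : 1 ≤ c) :
    Integrable (fun x => max ((cutoff c ∘ v) x * U x * v x) 0) μ :=
  hUint.mono' ((((lipschitzWith_cutoff (by linarith)).continuous.measurable.comp hv).mul
    hU |>.mul hv).max measurable_const).aestronglyMeasurable (ae_norm_max_cutoff_mul_le hv0 hc)

theorem tendsto_integral_max_cutoff_mul (hU : Measurable U) (hv : Measurable v)
    (hv0 : ∀ᵐ x ∂μ, 0 ≤ v x) (hUint : Integrable (fun x => max (U x) 0 * min (v x) 1) μ) :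
    Tendsto (fun n : ℕ => ∫ x, max ((cutoff ((n : ℝ) + 1) ∘ v) x * U x * v x) 0 ∂μ) atTop
      (𝓝 0) := by
  have hc (n : ℕ) : (1 : ℝ) ≤ n + 1 := le_add_of_nonneg_left n.cast_nonneg
  have hlim : ∀ᵐ x ∂μ, Tendsto (fun n : ℕ => max ((cutoff ((n : ℝ) + 1) ∘ v) x * U x * v x) 0)
      atTop (𝓝 0) := by
    filter_upwards [hv0] with x hx
    have hbound (n : ℕ) : max ((cutoff ((n : ℝ) + 1) ∘ v) x * U x * v x) 0 ≤
        max (U x) 0 * (1 / ((n : ℝ) + 1)) :=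
      (max_cutoff_mul_le (hc n) hx (U x)).trans (mul_le_mul_of_nonneg_left
        ((min_le_right _ _).trans_eq (one_div _).symm) (le_max_right _ _))
    refine tendsto_of_tendsto_of_tendsto_of_le_of_le tendsto_const_nhds ?_
      (fun n => le_max_right _ _) hbound
    simpa using tendsto_one_div_add_atTop_nhds_zero_nat.const_mul (max (U x) 0)
  simpa using tendsto_integral_of_dominated_convergence _
    (fun n => (integrable_max_cutoff_mul hU hv hv0 hUint (hc n)).aestronglyMeasurable) hUint
    (fun n => ae_norm_max_cutoff_mul_le hv0 (hc n)) hlim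

end potential

theorem ae_eq_zero_or_ae_pos_of_measure_mul_eq_zero [MeasurableSpace X] {μ : Measure X}
    {v : X → ℝ} (hv0 : ∀ᵐ x ∂μ, 0 ≤ v x) (h : μ {x | v x = 0} * μ {x | 0 < v x} = 0) :
    (∀ᵐ x ∂μ, v x = 0) ∨ (∀ᵐ x ∂μ, 0 < v x) := by
  rcases mul_eq_zero.1 h with h | h
  · right
    filter_upwards [hv0, measure_eq_zero_iff_ae_notMem.1 h] with x h1 h2
    exact h1.lt_of_ne (Ne.symm h2)
  · left
    filter_upwards [hv0, measure_eq_zero_iff_ae_notMem.1 h] with x h1 h2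
    exact le_antisymm (not_lt.1 h2) h1

theorem global_strong_maximum_principle_general [MeasurableSpace X] (μ : Measure X) [SigmaFinite μ]
    (k : X → X → ℝ≥0∞) (hkmeas : Measurable (Function.uncurry k))
    (hkpos : ∀ x y, 0 < k x y)
    (U : X → ℝ) (hU : Measurable U)
    (v : X → ℝ) (hv : memDI μ k v) (hv0 : ∀ᵐ x ∂μ, 0 ≤ v x)
    (hUint : Integrable (fun x => max (U x) 0 * min (v x) 1) μ)
    (hineq : ∀ φ : X → ℝ, memDI μ k φ → (∀ x, 0 ≤ φ x) →
      Integrable (fun x => min (φ x * U x * v x) 0) μ ∧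
        (Integrable (fun x => φ x * U x * v x) μ →
          0 ≤ formI₂ μ k φ v + ∫ x, φ x * U x * v x ∂μ)) :
    (∀ᵐ x ∂μ, v x = 0) ∨ (∀ᵐ x ∂μ, 0 < v x) := by
  have hbound (n : ℕ) : ∫ p, jumpDensity k v p ∂(μ.prod μ) ≤
      2 * ∫ x, max ((cutoff ((n : ℝ) + 1) ∘ v) x * U x * v x) 0 ∂μ := by
    have hc : (1 : ℝ) ≤ n + 1 := le_add_of_nonneg_left n.cast_nonneg
    have hpos := integrable_max_cutoff_mul hU hv.1 hv0 hUint hc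
    obtain ⟨hneg, hineqₙ⟩ := hineq (cutoff ((n : ℝ) + 1) ∘ v)
      (hv.comp_lipschitzWith (lipschitzWith_cutoff (by linarith))) fun x => le_max_right _ _
    have hint : Integrable (fun x => (cutoff ((n : ℝ) + 1) ∘ v) x * U x * v x) μ :=
      (hpos.add hneg).congr (.of_forall fun x => by rw [Pi.add_apply, max_add_min, add_zero])
    calc ∫ p, jumpDensity k v p ∂(μ.prod μ)
        ≤ -2 * formI₂ μ k (cutoff ((n : ℝ) + 1) ∘ v) v := integral_jumpDensity_le hkmeas hv hc
      _ ≤ 2 * ∫ x, (cutoff ((n : ℝ) + 1) ∘ v) x * U x * v x ∂μ := by linarith [hineqₙ hint]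
      _ ≤ _ := by linarith [integral_mono hint hpos fun x => le_max_left _ _]
  have hjump := ge_of_tendsto'
    ((tendsto_integral_max_cutoff_mul hU hv.1 hv0 hUint).const_mul 2) hbound
  rw [mul_zero] at hjump
  exact ae_eq_zero_or_ae_pos_of_measure_mul_eq_zero hv0
    (measure_zero_mul_measure_pos_eq_zero hkmeas hkpos hv hjump)

/-- global strong maximum principle. -/
theorem global_strong_maximum_principle [MeasurableSpace X] (μ : Measure X) [SigmaFinite μ]
    (k : X → X → ℝ≥0∞) (hkmeas : Measurable (Function.uncurry k))
    (hkpos : ∀ x y, 0 < k x y) (hksymm : ∀ x y, k x y = k y x)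
    (U : X → ℝ) (hU : Measurable U)
    (v : X → ℝ) (hv : memDI μ k v) (hv0 : ∀ᵐ x ∂μ, 0 ≤ v x)
    (hUint : Integrable (fun x => max (U x) 0 * min (v x) 1) μ)
    (hineq : ∀ φ : X → ℝ, memDI μ k φ → (∀ x, 0 ≤ φ x) →
      Integrable (fun x => min (φ x * U x * v x) 0) μ ∧
        (Integrable (fun x => φ x * U x * v x) μ →
          0 ≤ formI₂ μ k φ v + ∫ x, φ x * U x * v x ∂μ)) :
    (∀ᵐ x ∂μ, v x = 0) ∨ (∀ᵐ x ∂μ, 0 < v x) :=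
  global_strong_maximum_principle_general μ k hkmeas hkpos U hU v hv hv0 hUint hineq

end
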